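/- arXiv:2201.04479 — 4 statements merged into one kernel-verified Lean document; each statement's English description precedes it below -/
import Mathlib

section
/- For integers n ≥ 2 and k ≥ 3 with (n,k) ≠ (2,3), the formal power series Q(t) = (1-t)^{-1} · (1 - n t + n t^{k-1} - t^k)^{-1} over ℚ has all Taylor coefficients strictly positive. -/
open PowerSeries

/-- The power series `Q(t) = (1-t)⁻¹ · (1 - n t + n t^(k-1) - t^k)⁻¹` over `ℚ`. -/
noncomputable def Qser (n k : ℕ) : PowerSeries ℚ :=
  (1 - PowerSeries.X)⁻¹ *
    (1 - (n : ℚ) • PowerSeries.X + (n : ℚ) • PowerSeries.X ^ (k - 1)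
      - PowerSeries.X ^ k)⁻¹

/-!
With `k = m + 3` and `c = n - 1`, the denominator factors as `(1 - t) P(t)` with
`P = 1 - c (t + ⋯ + t^(m+1)) + t^(m+2)`, so `Q = (1 - t)⁻² P⁻¹` and it suffices that the
coefficients `r_j` of `P⁻¹` are positive. They satisfy `r_0 = 1` and
`r_(j+1) = c (r_j + ⋯ + r_(j-m)) - r_(j-m-1)` (indices below `0` read as `0`), and an
induction shows that they are nondecreasing: if `m ≥ 1` the terms `c r_j ≥ r_j` and
`c r_(j-m) ≥ r_(j-m-1)` already suffice, while for `m = 0` one needs `c ≥ 2`, i.e.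
`(n, k) ≠ (2, 3)`.
-/

open Finset

theorem le_mul_sum_range_sub_of_antitone {R : Type*} [CommRing R] [LinearOrder R]
    [IsStrictOrderedRing R] {a : ℕ → R} (ha : Antitone a) (ha0 : ∀ i, 0 ≤ a i) {c : R}
    (hc : 1 ≤ c) {m : ℕ} (hcm : 1 ≤ m ∨ 2 ≤ c) :
    a 0 ≤ c * ∑ i ∈ range (m + 1), a i - a (m + 1) := by
  have hsum0 : 0 ≤ ∑ i ∈ range (m + 1), a i := sum_nonneg fun i _ => ha0 i
  rcases m with _ | m
  · have hc2 : 2 ≤ c := hcm.resolve_left (by omega)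
    have ha1 : a 1 ≤ a 0 := ha zero_le_one
    simp only [zero_add, sum_range_one]
    nlinarith [ha0 0]
  · have hpair : a 0 + a (m + 1) ≤ ∑ i ∈ range (m + 2), a i := by
      rw [sum_range_succ]
      gcongr
      exact single_le_sum (fun i _ => ha0 i) (mem_range.2 m.succ_pos)
    have hstep : a (m + 2) ≤ a (m + 1) := ha (Nat.le_succ _)
    nlinarith

theorem coeff_mul_pos {R : Type*} [Semiring R] [PartialOrder R] [IsStrictOrderedRing R]
    {f g : R⟦X⟧} (hf : ∀ i, 0 < coeff i f) (hg : ∀ i, 0 < coeff i g) (j : ℕ) :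
    0 < coeff j (f * g) := by
  rw [coeff_mul]
  exact sum_pos (fun p _ => mul_pos (hf p.1) (hg p.2)) ⟨(0, j), by simp⟩

theorem antitone_coeff_X_pow_mul {R : Type*} [Semiring R] [Preorder R] {f : R⟦X⟧} {j : ℕ}
    (hf : MonotoneOn (fun l => coeff l f) (Set.Iic j)) (hf0 : 0 ≤ coeff 0 f) :
    Antitone fun i => coeff j (X ^ i * f) := by
  have hnonneg : ∀ l ≤ j, 0 ≤ coeff l f := fun l hl =>
    hf0.trans (hf (by simp) (by simpa using hl) (Nat.zero_le l))
  intro i i' hii'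
  simp only [coeff_X_pow_mul']
  split_ifs with h' h
  · exact hf (by simp) (by simp) (by omega)
  · omega
  · exact hnonneg _ (by omega)
  · rfl

theorem coeff_X_pow_mul_nonneg {R : Type*} [Semiring R] [Preorder R] {f : R⟦X⟧} {i j : ℕ}
    (hf : ∀ l ≤ j, 0 ≤ coeff l f) :
    0 ≤ coeff j (X ^ i * f) := by
  rw [coeff_X_pow_mul']
  split_ifs
  · exact hf _ (by omega)
  · rfl

section Cofactor

variable {K : Type*} [Field K]

theorem one_sub_X_inv : (1 - X : K⟦X⟧)⁻¹ = PowerSeries.mk 1 :=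
  ((eq_inv_iff_mul_eq_one (by simp)).2 (mk_one_mul_one_sub_eq_one K)).symm

noncomputable def cofactor (c : K) (m : ℕ) : K⟦X⟧ :=
  1 - C c * X * ∑ i ∈ range (m + 1), X ^ i + X ^ (m + 2)

theorem one_sub_X_mul_cofactor (c : K) (m : ℕ) :
    (1 - X) * cofactor c m = 1 - (c + 1) • X + (c + 1) • X ^ (m + 2) - X ^ (m + 3) := by
  have hgeom := mul_neg_geom_sum (X : K⟦X⟧) (m + 1)
  rw [smul_eq_C_mul, smul_eq_C_mul, map_add, map_one, cofactor]
  linear_combination -(C c * X) * hgeom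

theorem constantCoeff_cofactor (c : K) (m : ℕ) : constantCoeff (cofactor c m) = 1 := by
  simp [cofactor]

theorem coeff_succ_inv_cofactor (c : K) (m j : ℕ) :
    coeff (j + 1) (cofactor c m)⁻¹ =
      c * ∑ i ∈ range (m + 1), coeff j (X ^ i * (cofactor c m)⁻¹)
        - coeff j (X ^ (m + 1) * (cofactor c m)⁻¹) := by
  set r := (cofactor c m)⁻¹
  have hr : cofactor c m * r = 1 :=
    PowerSeries.mul_inv_cancel _ (by simp [constantCoeff_cofactor])
  have hrec : r = 1 + X * (C c * ∑ i ∈ range (m + 1), X ^ i * r - X ^ (m + 1) * r) := by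
    rw [cofactor] at hr
    rw [← sum_mul]
    linear_combination hr
  conv_lhs => rw [hrec]
  rw [map_add, coeff_succ_X_mul, map_sub, coeff_C_mul, map_sum]
  simp

variable [LinearOrder K] [IsStrictOrderedRing K]

theorem monotone_coeff_inv_cofactor {c : K} (hc : 1 ≤ c) {m : ℕ} (hcm : 1 ≤ m ∨ 2 ≤ c) :
    Monotone fun j => coeff j (cofactor c m)⁻¹ := by
  set r := (cofactor c m)⁻¹
  have hr0 : coeff 0 r = 1 := by simp [r, constantCoeff_cofactor]
  refine monotone_nat_of_le_succ fun j => ?_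
  induction j using Nat.strong_induction_on with
  | _ j ih =>
    have hmono : MonotoneOn (fun l => coeff l r) (Set.Iic j) :=
      monotoneOn_of_le_succ Set.ordConnected_Iic fun l _ _ hl => ih l (by simpa using hl)
    have hnonneg : ∀ l ≤ j, 0 ≤ coeff l r := fun l hl =>
      (zero_le_one.trans_eq hr0.symm).trans (hmono (by simp) (by simpa using hl) (Nat.zero_le l))
    have key := le_mul_sum_range_sub_of_antitone (antitone_coeff_X_pow_mul hmono (by simp [hr0]))
      (fun i => coeff_X_pow_mul_nonneg hnonneg) hc hcm
    simpa only [pow_zero, one_mul] using key.trans_eq (coeff_succ_inv_cofactor c m j).symm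

end Cofactor

theorem Qser_add_three (n m : ℕ) :
    Qser n (m + 3) = (1 - X)⁻¹ * ((1 - X)⁻¹ * (cofactor ((n : ℚ) - 1) m)⁻¹) := by
  have hdenom := one_sub_X_mul_cofactor ((n : ℚ) - 1) m
  rw [sub_add_cancel] at hdenom
  rw [Qser, Nat.add_sub_assoc (by norm_num), ← hdenom, PowerSeries.mul_inv_rev,
    mul_comm (cofactor _ _)⁻¹]

theorem Qser_coeff_pos (n k : ℕ) (hn : 2 ≤ n) (hk : 3 ≤ k)
    (hnk : (n, k) ≠ (2, 3)) :
    ∀ j : ℕ, 0 < PowerSeries.coeff (R := ℚ) j (Qser n k) := by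
  obtain ⟨m, rfl⟩ : ∃ m, k = m + 3 := ⟨k - 3, by omega⟩
  have hc : (1 : ℚ) ≤ n - 1 := by
    rw [le_sub_iff_add_le]
    exact_mod_cast hn
  have hcm : 1 ≤ m ∨ (2 : ℚ) ≤ n - 1 := by
    rcases Nat.eq_zero_or_pos m with rfl | hm
    · right
      rw [le_sub_iff_add_le]
      exact_mod_cast (show 3 ≤ n by grind)
    · exact Or.inl hm
  have hgeom (i : ℕ) : 0 < coeff i (1 - X : ℚ⟦X⟧)⁻¹ := by simp [one_sub_X_inv]
  have hinv (i : ℕ) : 0 < coeff i (cofactor ((n : ℚ) - 1) m)⁻¹ :=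
    calc (0 : ℚ) < coeff 0 (cofactor ((n : ℚ) - 1) m)⁻¹ := by simp [constantCoeff_cofactor]
      _ ≤ coeff i (cofactor ((n : ℚ) - 1) m)⁻¹ :=
        monotone_coeff_inv_cofactor hc hcm (Nat.zero_le i)
  rw [Qser_add_three]
  exact coeff_mul_pos hgeom (coeff_mul_pos hgeom hinv)
end

section
/- Let n ≥ 2 and k ≥ 3 be integers and let (c_j)_{j≥0} be a sequence of real numbers (with convention c_s = 0 for s < 0) such that c_j = 0 for 0 ≤ j ≤ k-1, c_j ≥ 0 for all j ≥ k, and c_{j+1} ≤ n·c_j - n·c_{j+2-k} + c_{j+1-k} for all j ≥ k-1. Then c_j = 0 for all j. -/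
lemma eq_zero_of_le_recurrence_of_forall_lt {c : ℤ → ℝ} {n : ℝ} {k m : ℤ} (hk : 2 ≤ k)
    (hlt : ∀ s < m, c s = 0) (hnonneg : 0 ≤ c m)
    (hrec : c m ≤ n * c (m - 1) - n * c (m + 1 - k) + c (m - k)) :
    c m = 0 := by
  rw [hlt (m - 1) (by omega), hlt (m + 1 - k) (by omega), hlt (m - k) (by omega)] at hrec
  linarith

theorem sequence_vanishes_general (n k : ℕ) (hk : 3 ≤ k)
    (c : ℤ → ℝ)
    (hneg : ∀ s : ℤ, s < 0 → c s = 0)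
    (hinit : ∀ j : ℤ, 0 ≤ j → j ≤ (k : ℤ) - 1 → c j = 0)
    (hnonneg : ∀ j : ℤ, (k : ℤ) ≤ j → 0 ≤ c j)
    (hrec : ∀ j : ℤ, (k : ℤ) - 1 ≤ j →
      c (j + 1) ≤ (n : ℝ) * c j - (n : ℝ) * c (j + 2 - k) + c (j + 1 - k)) :
    ∀ j : ℤ, c j = 0 := by
  intro j
  induction j using Int.strongRec (m := 0) with
  | lt s hs => exact hneg s hs
  | ge m hm ih =>
    by_cases hmk : m ≤ (k : ℤ) - 1
    · exact hinit m hm hmk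
    · have hstep := hrec (m - 1) (by omega)
      rw [sub_add_cancel, show m - 1 + 2 - k = m + 1 - k by ring] at hstep
      exact eq_zero_of_le_recurrence_of_forall_lt (by omega) ih (hnonneg m (by omega)) hstep

theorem sequence_vanishes (n k : ℕ) (hn : 2 ≤ n) (hk : 3 ≤ k)
    (c : ℤ → ℝ)
    (hneg : ∀ s : ℤ, s < 0 → c s = 0)
    (hinit : ∀ j : ℤ, 0 ≤ j → j ≤ (k : ℤ) - 1 → c j = 0)
    (hnonneg : ∀ j : ℤ, (k : ℤ) ≤ j → 0 ≤ c j)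
    (hrec : ∀ j : ℤ, (k : ℤ) - 1 ≤ j →
      c (j + 1) ≤ (n : ℝ) * c j - (n : ℝ) * c (j + 2 - k) + c (j + 1 - k)) :
    ∀ j : ℤ, c j = 0 :=
  sequence_vanishes_general n k hk c hneg hinit hnonneg hrec
end

section
/- Let n ≥ 2 and k ≥ 3 be integers with (n,k) ∉ {(2,3), (2,4), (3,3)}. Then the polynomial p(t) = 1 - n t + n t^{k-1} - t^k has a real root r with 0 < r < 1, and consequently the Taylor coefficients b_j of Q(t) = (1-t)^{-1} p(t)^{-1} grow exponentially: there exist c > 0 and q > 1 with b_j ≥ c·q^j for all j. -/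
/-!
Write `k = m + 2`. Then `p(t) = (1 - t) g(t)` with
`g(t) = 1 - (n - 1)(t + ⋯ + t^m) + t^(m+1)`, and `g(0) = 1 > 0 > 2 - (n - 1) m = g(1)`
under the exclusions, so `g` (hence `p`) has a root in `(0, 1)`.

The coefficients `d_j` of `1/g`, extended by `0` to negative `j`, satisfy
`d_j = [j = 0] + (n - 1)(d_{j-1} + ⋯ + d_{j-m}) - d_{j-m-1}`. By induction they are
nonnegative and `d_j ≥ d_{j-1} + d_{j-2}`, because the subtracted term is dominated by
the surplus of the positive ones; hence they grow at least like `(3/2)^j`. Multiplying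
twice by `1/(1 - t)`, which has coefficients `1`, only increases nonnegative coefficients.
-/

open PowerSeries

/-- The power series `Q(t) = (1-t)⁻¹ · (1 - n t + n t^(k-1) - t^k)⁻¹` over `ℝ`. -/
noncomputable def QserR (n k : ℕ) : PowerSeries ℝ :=
  (1 - PowerSeries.X)⁻¹ *
    (1 - (n : ℝ) • PowerSeries.X + (n : ℝ) • PowerSeries.X ^ (k - 1)
      - PowerSeries.X ^ k)⁻¹

open Finset

def reducedDenom {R : Type*} [CommRing R] (c x : R) (m : ℕ) : R :=
  1 - (c - 1) * ∑ i ∈ range m, x ^ (i + 1) + x ^ (m + 1)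

theorem one_sub_mul_reducedDenom {R : Type*} [CommRing R] (c x : R) (m : ℕ) :
    (1 - x) * reducedDenom c x m = 1 - c * x + c * x ^ (m + 1) - x ^ (m + 2) := by
  have h : (1 - x) * ∑ i ∈ range m, x ^ (i + 1) = x - x ^ (m + 1) := by
    induction m with
    | zero => simp
    | succ m ih => rw [sum_range_succ, mul_add, ih]; ring
  unfold reducedDenom
  linear_combination (1 - c) * h

theorem exists_root_reducedDenom {c : ℝ} {m : ℕ} (h : 2 < (c - 1) * m) :
    ∃ r : ℝ, 0 < r ∧ r < 1 ∧ reducedDenom c r m = 0 := by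
  have hcont : Continuous fun r : ℝ => reducedDenom c r m := by
    unfold reducedDenom; fun_prop
  have hmem : (0 : ℝ) ∈ Set.Ioo (reducedDenom c 1 m) (reducedDenom c 0 m) := by
    simp only [reducedDenom, one_pow, sum_const, card_range, nsmul_eq_mul, mul_one]
    exact ⟨by linarith, by simp⟩
  obtain ⟨r, hr, hr0⟩ := intermediate_value_Ioo' zero_le_one hcont.continuousOn hmem
  exact ⟨r, hr.1, hr.2, hr0⟩

theorem coeff_X_pow_mul_eq {R : Type*} [CommRing R] {D : R⟦X⟧} {d : ℤ → R}
    (hd : ∀ n : ℕ, d n = coeff n D) (hneg : ∀ j < 0, d j = 0)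
    (i j : ℕ) : coeff j (X ^ i * D) = d (j - i) := by
  rw [coeff_X_pow_mul']
  split_ifs with h
  · rw [← Nat.cast_sub h, hd]
  · exact (hneg _ (by omega)).symm

theorem coeff_inv_reducedDenom {c : ℝ} {m : ℕ} {d : ℤ → ℝ}
    (hd : ∀ n : ℕ, d n = coeff n (reducedDenom (C c) X m)⁻¹) (hneg : ∀ j < 0, d j = 0)
    (j : ℕ) :
    d j = (if j = 0 then 1 else 0) + (c - 1) * ∑ i ∈ range m, d (j - (i + 1))
      - d (j - (m + 1)) := by
  set G := reducedDenom (C c) X m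
  have hG : constantCoeff G ≠ 0 := by
    simp [G, reducedDenom]
  have hinv : G⁻¹ = 1 + C (c - 1) * ∑ i ∈ range m, X ^ (i + 1) * G⁻¹ - X ^ (m + 1) * G⁻¹ := by
    have h1 := PowerSeries.mul_inv_cancel _ hG
    rw [map_sub, map_one, ← sum_mul]
    simp only [G, reducedDenom] at h1 ⊢
    linear_combination h1
  rw [hd, hinv, map_sub, map_add, coeff_one, coeff_C_mul, map_sum]
  simp only [coeff_X_pow_mul_eq hd hneg, Nat.cast_add, Nat.cast_one]

theorem add_add_le_mul_sum_of_antitone {x : ℕ → ℝ} (hx : Antitone x) (hx0 : ∀ i, 0 ≤ x i)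
    {a : ℝ} {m : ℕ} (ha : 1 ≤ a) (ham : 3 ≤ a * m) :
    x 0 + x 1 + x m ≤ a * ∑ i ∈ range m, x i := by
  have h10 : x 1 ≤ x 0 := hx zero_le_one
  rcases lt_or_ge m 3 with hm | hm
  · interval_cases m
    · norm_num at ham
    · simp only [Nat.cast_one, mul_one, sum_range_one] at ham ⊢
      nlinarith [hx0 1]
    · have h21 : x 2 ≤ x 1 := hx one_le_two
      simp only [Nat.cast_ofNat, sum_range_succ, sum_range_zero, zero_add] at ham ⊢
      nlinarith [hx0 1]
  · have hS : x 0 + x 1 + x 2 ≤ ∑ i ∈ range m, x i := by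
      simpa [sum_range_succ] using
        sum_le_sum_of_subset_of_nonneg (range_subset_range.2 hm) fun i _ _ => hx0 i
    have hm2 : x m ≤ x 2 := hx (by omega)
    nlinarith [sum_nonneg fun i (_ : i ∈ range m) => hx0 i]

theorem nonneg_and_add_le_of_rec {a : ℝ} {m : ℕ} (ha : 1 ≤ a) (ham : 3 ≤ a * m) {d : ℤ → ℝ}
    (hneg : ∀ j < 0, d j = 0)
    (hrec : ∀ j : ℕ, d j = (if j = 0 then 1 else 0) + a * ∑ i ∈ range m, d (j - (i + 1))
      - d (j - (m + 1))) (j : ℤ) :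
    0 ≤ d j ∧ d (j - 2) + d (j - 1) ≤ d j := by
  suffices ∀ N : ℕ, ∀ j : ℤ, j < N → 0 ≤ d j ∧ d (j - 2) + d (j - 1) ≤ d j from
    this (j.toNat + 1) j (by omega)
  intro N
  induction N with
  | zero =>
    intro j hj
    simp [hneg j (by omega), hneg (j - 1) (by omega), hneg (j - 2) (by omega)]
  | succ N below =>
    intro j hj
    obtain hj | rfl : j < N ∨ j = N := by omega
    · exact below j hj
    set x : ℕ → ℝ := fun i => d (N - (i + 1))
    have hx0 : ∀ i, 0 ≤ x i := fun i => (below _ (by omega)).1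
    have hx : Antitone x := antitone_nat_of_succ_le fun i => by
      have h := (below (N - (i + 1)) (by omega)).2
      have h2 := (below (N - (i + 1) - 2) (by omega)).1
      simp only [x, Nat.cast_add, Nat.cast_one]
      rw [show (N : ℤ) - (i + 1 + 1) = N - (i + 1) - 1 by ring]
      linarith
    have key := add_add_le_mul_sum_of_antitone hx hx0 ha ham
    have h0 : (0 : ℝ) ≤ if N = 0 then 1 else 0 := by split_ifs <;> norm_num
    have hfib : d (N - 2) + d (N - 1) ≤ d N := by
      simp only [x, Nat.cast_zero, Nat.cast_one, zero_add, one_add_one_eq_two] at key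
      linarith [hrec N]
    exact ⟨by linarith [(below (N - 1) (by omega)).1, (below (N - 2) (by omega)).1], hfib⟩

theorem mul_pow_le_of_add_le {f : ℕ → ℝ} {c q : ℝ} (hc : 0 ≤ c) (hq : 0 ≤ q)
    (hq2 : q ^ 2 ≤ 1 + q) (h0 : c ≤ f 0) (h1 : c * q ≤ f 1)
    (hf : ∀ n, f n + f (n + 1) ≤ f (n + 2)) (n : ℕ) : c * q ^ n ≤ f n := by
  suffices c * q ^ n ≤ f n ∧ c * q ^ (n + 1) ≤ f (n + 1) from this.1
  induction n with
  | zero => simpa using ⟨h0, h1⟩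
  | succ n ih =>
    refine ⟨ih.2, ?_⟩
    have hcq : 0 ≤ c * q ^ n := by positivity
    calc c * q ^ (n + 2) = c * q ^ n * q ^ 2 := by ring
      _ ≤ c * q ^ n * (1 + q) := mul_le_mul_of_nonneg_left hq2 hcq
      _ = c * q ^ n + c * q ^ (n + 1) := by ring
      _ ≤ f n + f (n + 1) := add_le_add ih.1 ih.2
      _ ≤ f (n + 2) := hf n

theorem coeff_le_coeff_inv_one_sub_X_mul {k : Type*} [Field k] [LinearOrder k]
    [IsStrictOrderedRing k] {D : k⟦X⟧} (hD : ∀ j, 0 ≤ coeff j D) (j : ℕ) :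
    coeff j D ≤ coeff j ((1 - X)⁻¹ * D) := by
  have hinv : (1 - X : k⟦X⟧)⁻¹ = PowerSeries.mk 1 :=
    ((PowerSeries.eq_inv_iff_mul_eq_one (by simp)).2 (mk_one_mul_one_sub_eq_one k)).symm
  rw [hinv, coeff_mul]
  simpa using single_le_sum
    (f := fun p : ℕ × ℕ => coeff p.1 (PowerSeries.mk 1 : k⟦X⟧) * coeff p.2 D)
    (fun p _ => by simpa using hD p.2) (a := (0, j)) (by simp)

theorem half_mul_pow_le_coeff_inv_reducedDenom {c : ℝ} {m : ℕ} (hc : 2 ≤ c)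
    (hcm : 3 ≤ (c - 1) * m) (j : ℕ) :
    0 ≤ coeff j (reducedDenom (C c) X m)⁻¹ ∧
      1 / 2 * (3 / 2) ^ j ≤ coeff j (reducedDenom (C c) X m)⁻¹ := by
  set D := (reducedDenom (C c) X m)⁻¹
  set d : ℤ → ℝ := Function.extend (↑) (fun j : ℕ => coeff j D) 0
  have hd : ∀ j : ℕ, d j = coeff j D := Nat.cast_injective.extend_apply _ _
  have hneg : ∀ j < 0, d j = 0 := fun j hj =>
    Function.extend_apply' _ _ _ (by rintro ⟨a, rfl⟩; omega)
  have hfib := nonneg_and_add_le_of_rec (by linarith) hcm hneg (coeff_inv_reducedDenom hd hneg)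
  have h0 : d 0 = 1 := by
    rw [← Nat.cast_zero, hd, coeff_zero_eq_constantCoeff_apply, constantCoeff_inv]
    simp [reducedDenom]
  refine ⟨hd j ▸ (hfib j).1, mul_pow_le_of_add_le (f := fun j => coeff j D) (by norm_num)
    (by norm_num) (by norm_num) ?_ ?_ (fun n => ?_) j⟩
  · simp only [← hd, Nat.cast_zero, h0]; norm_num
  · have := (hfib 1).2
    simp only [← hd]
    norm_num [h0, hneg (-1) (by norm_num)] at this ⊢
    linarith
  · have := (hfib (n + 2 : ℕ)).2
    simp only [← hd]
    push_cast at this ⊢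
    ring_nf at this ⊢
    exact this

theorem root_and_exponential_growth (n k : ℕ) (hn : 2 ≤ n) (hk : 3 ≤ k)
    (h23 : (n, k) ≠ (2, 3)) (h24 : (n, k) ≠ (2, 4)) (h33 : (n, k) ≠ (3, 3)) :
    (∃ r : ℝ, 0 < r ∧ r < 1 ∧
      1 - (n : ℝ) * r + (n : ℝ) * r ^ (k - 1) - r ^ k = 0) ∧
    ∃ c q : ℝ, 0 < c ∧ 1 < q ∧
      ∀ j : ℕ, c * q ^ j ≤ PowerSeries.coeff (R := ℝ) j (QserR n k) := by
  obtain ⟨m, rfl⟩ : ∃ m, k = m + 2 := ⟨k - 2, by omega⟩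
  have hnm : 3 ≤ (n - 1) * m := by
    obtain rfl | rfl | hn4 : n = 2 ∨ n = 3 ∨ 4 ≤ n := by omega
    · have : m ≠ 1 ∧ m ≠ 2 := ⟨by rintro rfl; exact h23 rfl, by rintro rfl; exact h24 rfl⟩
      omega
    · have : m ≠ 1 := by rintro rfl; exact h33 rfl
      omega
    · exact le_trans (by omega) (Nat.mul_le_mul_left _ (by omega : 1 ≤ m))
  have hnm' : (3 : ℝ) ≤ (n - 1) * m := by
    rw [← Nat.cast_pred (by omega)]
    exact_mod_cast hnm
  have hp : (1 - (n : ℝ) • X + (n : ℝ) • X ^ (m + 2 - 1) - X ^ (m + 2) : ℝ⟦X⟧)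
      = (1 - X) * reducedDenom (C (n : ℝ)) X m := by
    rw [one_sub_mul_reducedDenom, smul_eq_C_mul, smul_eq_C_mul]; rfl
  constructor
  · obtain ⟨r, hr0, hr1, hr⟩ := exists_root_reducedDenom (c := n) (m := m) (by linarith)
    refine ⟨r, hr0, hr1, ?_⟩
    rw [show m + 2 - 1 = m + 1 from rfl, ← one_sub_mul_reducedDenom, hr, mul_zero]
  · refine ⟨1 / 2, 3 / 2, by norm_num, by norm_num, fun j => ?_⟩
    have hD := half_mul_pow_le_coeff_inv_reducedDenom (by exact_mod_cast hn) hnm'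
    have hD1 := coeff_le_coeff_inv_one_sub_X_mul fun i => (hD i).1
    have hD2 := coeff_le_coeff_inv_one_sub_X_mul fun i => (hD i).1.trans (hD1 i)
    rw [QserR, hp, PowerSeries.mul_inv_rev, mul_comm _ (1 - X)⁻¹]
    exact ((hD j).2.trans (hD1 j)).trans (hD2 j)
end

section
/- Let n ≥ 2 and k ≥ 3 with (n,k) ≠ (2,3), and let b_j be the Taylor coefficients of Q(t) = (1−t)^{-1}(1 − n t + n t^{k-1} − t^k)^{-1}. Then the sequence (b_j) is strictly increasing for j ≥ 0; in particular b_j → ∞, so Q is not a polynomial. -/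
/-!
Write `1 - n t + n t^(k-1) - t^k = (1 - t) B(t)` with
`B(t) = 1 - (n - 1)(t + ⋯ + t^(k-2)) + t^(k-1)`, so that `(1 - t)² Q = 1 / B`.
The coefficients `c_m` of `1 / B` (with `c_m = 0` for `m < 0`) satisfy `c_0 = 1` and
`c_(m+1) = (n - 1)(c_m + ⋯ + c_(m-k+3)) - c_(m-k+2)`, and they are nondecreasing by induction:
the negative term is absorbed by `(n - 2) c_m` when `n ≥ 3` and by `c_(m-1)` when `k ≥ 4`.
So `c_m ≥ 1`, hence the coefficients of `(1 - t) Q`, the partial sums of `(c_m)`, are at least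
`m + 1`; they are the increments of `(b_j)`, and `b_j ≥ j + 1`.
-/

open PowerSeries Filter

open Finset

section PowerSeries

variable {R : Type*} [CommRing R]

theorem PowerSeries.coeff_X_pow_mul_eq_coeff_coe (f : R⟦X⟧) (p d : ℕ) :
    coeff d (X ^ p * f) = (f : LaurentSeries R).coeff ((d : ℤ) - p) := by
  rw [coeff_X_pow_mul', PowerSeries.coeff_coe]
  split_ifs
  · omega
  · congr; omega
  · rfl
  · omega

theorem PowerSeries.coeff_succ_sub_coeff (f : R⟦X⟧) (j : ℕ) :
    coeff (j + 1) f - coeff j f = coeff (j + 1) ((1 - X) * f) := by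
  rw [sub_mul, one_mul, map_sub, coeff_succ_X_mul]

theorem PowerSeries.coeff_zero_one_sub_X_mul (f : R⟦X⟧) :
    coeff 0 ((1 - X) * f) = coeff 0 f := by
  simp [sub_mul]

end PowerSeries

section Ordered

variable {K : Type*} [CommRing K] [LinearOrder K] [IsStrictOrderedRing K]

theorem le_mul_sum_sub_of_monotoneOn {e : ℤ → K} {a : K} {r : ℕ}
    (ha : 1 ≤ a) (hr : 1 ≤ r) (har : 2 ≤ a ∨ 2 ≤ r) (h_neg : ∀ m < 0, e m = 0) {m : ℤ}
    (hmono : MonotoneOn e (Set.Iic m)) :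
    e m ≤ a * ∑ i ∈ range r, e (m - i) - e (m - r) := by
  have mono {x y : ℤ} (hxy : x ≤ y) (hy : y ≤ m) : e x ≤ e y :=
    hmono (Set.mem_Iic.2 (hxy.trans hy)) (Set.mem_Iic.2 hy) hxy
  have nonneg {x : ℤ} (hx : x ≤ m) : 0 ≤ e x := by
    rcases lt_or_ge x 0 with hx0 | hx0
    · exact (h_neg x hx0).ge
    · simpa [h_neg (-1) (by norm_num)] using mono (by omega : (-1 : ℤ) ≤ x) hx
  obtain ⟨s, rfl⟩ : ∃ s, r = s + 1 := ⟨r - 1, by omega⟩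
  rw [sum_range_succ', Nat.cast_zero, sub_zero]
  set S := ∑ i ∈ range s, e (m - (i + 1 : ℕ))
  have hS : 0 ≤ S := sum_nonneg fun i _ => nonneg (by omega)
  have hm : 0 ≤ e m := nonneg le_rfl
  have hlast : e (m - (s + 1 : ℕ)) ≤ e m := mono (by omega) le_rfl
  rcases har with ha2 | hs2
  · linarith [mul_nonneg (by linarith : 0 ≤ a - 2) hm,
      mul_nonneg (by linarith : (0 : K) ≤ a) hS]
  · have hS1 : e (m - (s + 1 : ℕ)) ≤ S :=
      calc e (m - (s + 1 : ℕ)) ≤ e (m - (0 + 1 : ℕ)) := mono (by omega) (by omega)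
        _ ≤ S := single_le_sum (f := fun i : ℕ => e (m - (i + 1 : ℕ)))
              (fun i _ => nonneg (by omega)) (mem_range.2 (by omega))
    linarith [mul_nonneg (by linarith : 0 ≤ a - 1) hm, mul_nonneg (by linarith : 0 ≤ a - 1) hS]

theorem monotone_of_eq_mul_sum_sub {e : ℤ → K} {a : K} {r : ℕ}
    (ha : 1 ≤ a) (hr : 1 ≤ r) (har : 2 ≤ a ∨ 2 ≤ r)
    (h_neg : ∀ m < 0, e m = 0) (h_zero : 0 ≤ e 0)
    (hrec : ∀ m : ℕ, e (m + 1) = a * ∑ i ∈ range r, e (m - i) - e (m - r)) :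
    Monotone e := by
  have le_succ (N : ℕ) : ∀ m : ℤ, m < N → e m ≤ e (m + 1) := by
    induction N with
    | zero =>
      intro m hm
      rw [h_neg m (by omega)]
      rcases lt_or_eq_of_le (show m + 1 ≤ 0 by omega) with h | h
      · rw [h_neg _ h]
      · rwa [h]
    | succ N ih =>
      intro m hm
      rcases lt_or_eq_of_le (show m ≤ N by omega) with h | rfl
      · exact ih m h
      · rw [hrec]
        exact le_mul_sum_sub_of_monotoneOn ha hr har h_neg
          (monotoneOn_of_le_add_one Set.ordConnected_Iic fun x _ _ hx => ih x (by simpa using hx))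
  exact monotone_int_of_le_succ fun m => le_succ (m.toNat + 1) m (by omega)

theorem PowerSeries.natCast_add_one_le_coeff {f : K⟦X⟧}
    (hf : ∀ j, 1 ≤ coeff j ((1 - X) * f)) (j : ℕ) :
    (j : K) + 1 ≤ coeff j f := by
  induction j with
  | zero => simpa [coeff_zero_one_sub_X_mul] using hf 0
  | succ j ih =>
    have hdiff := coeff_succ_sub_coeff f j
    push_cast
    linarith [hf (j + 1)]

end Ordered

noncomputable def Bser (n k : ℕ) : PowerSeries ℚ :=
  1 - ((n : ℚ) - 1) • ∑ i ∈ range (k - 2), X ^ (i + 1) + X ^ (k - 1)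

theorem constantCoeff_Bser (n : ℕ) {k : ℕ} (hk : 2 ≤ k) : constantCoeff (Bser n k) = 1 := by
  simp [Bser, show k - 1 ≠ 0 by omega]

theorem one_sub_X_mul_Bser (n : ℕ) {k : ℕ} (hk : 2 ≤ k) :
    (1 - X) * Bser n k = 1 - (n : ℚ) • X + (n : ℚ) • X ^ (k - 1) - X ^ k := by
  obtain ⟨r, rfl⟩ : ∃ r, k = r + 2 := ⟨k - 2, by omega⟩
  have geom : (1 - X) * ∑ i ∈ range r, (X : ℚ⟦X⟧) ^ (i + 1) = X * (1 - X ^ r) := by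
    simp_rw [pow_succ', ← mul_sum, mul_left_comm, mul_neg_geom_sum]
  rw [Bser, Nat.add_sub_cancel, show r + 2 - 1 = r + 1 by omega, mul_add, mul_sub,
    mul_smul_comm, geom]
  simp only [smul_eq_C_mul, map_natCast, map_sub, map_one]
  ring

theorem one_sub_X_mul_one_sub_X_mul_Qser (n : ℕ) {k : ℕ} (hk : 2 ≤ k) :
    (1 - X) * ((1 - X) * Qser n k) = (Bser n k)⁻¹ := by
  have h₁ : constantCoeff (1 - X : ℚ⟦X⟧) ≠ 0 := by simp
  have hA : constantCoeff ((1 - X) * Bser n k) ≠ 0 := by simp [constantCoeff_Bser n hk]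
  rw [eq_inv_iff_mul_eq_one (by simp [constantCoeff_Bser n hk]), Qser, ← one_sub_X_mul_Bser n hk]
  calc (1 - X) * ((1 - X) * ((1 - X)⁻¹ * ((1 - X) * Bser n k)⁻¹)) * Bser n k
      = ((1 - X) * (1 - X)⁻¹) * (((1 - X) * Bser n k) * ((1 - X) * Bser n k)⁻¹) := by ring
    _ = 1 := by rw [PowerSeries.mul_inv_cancel _ h₁, PowerSeries.mul_inv_cancel _ hA, one_mul]

-- Indexed by `ℤ` and zero at negative indices, so that the recurrence holds from `m = 0` on.
noncomputable def invBserCoeff (n k : ℕ) (m : ℤ) : ℚ :=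
  (((Bser n k)⁻¹ : ℚ⟦X⟧) : LaurentSeries ℚ).coeff m

theorem invBserCoeff_succ (n : ℕ) {k : ℕ} (hk : 2 ≤ k) (m : ℕ) :
    invBserCoeff n k (m + 1) = ((n : ℚ) - 1) * ∑ i ∈ range (k - 2), invBserCoeff n k (m - i)
      - invBserCoeff n k (m - (k - 2 : ℕ)) := by
  have h : coeff (m + 1) (Bser n k * (Bser n k)⁻¹) = 0 := by
    rw [PowerSeries.mul_inv_cancel _ (by simp [constantCoeff_Bser n hk]), coeff_one,
      if_neg m.add_one_ne_zero]
  obtain ⟨r, rfl⟩ : ∃ r, k = r + 2 := ⟨k - 2, by omega⟩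
  unfold invBserCoeff
  generalize (Bser n (r + 2))⁻¹ = C at h ⊢
  simp only [Bser, Nat.add_sub_cancel, show r + 2 - 1 = r + 1 by omega, sub_mul, add_mul,
    one_mul, smul_mul_assoc, sum_mul, map_sub, map_add, map_smul, map_sum,
    coeff_X_pow_mul_eq_coeff_coe, smul_eq_mul] at h
  rw [← LaurentSeries.coeff_coe_powerSeries] at h
  push_cast [add_sub_add_right_eq_sub] at h
  rw [Nat.add_sub_cancel]
  linear_combination h

theorem invBserCoeff_of_neg (n k : ℕ) {m : ℤ} (hm : m < 0) : invBserCoeff n k m = 0 := by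
  simp [invBserCoeff, PowerSeries.coeff_coe, hm]

theorem invBserCoeff_natCast (n k j : ℕ) : invBserCoeff n k j = coeff j (Bser n k)⁻¹ :=
  LaurentSeries.coeff_coe_powerSeries _ _

theorem invBserCoeff_zero (n : ℕ) {k : ℕ} (hk : 2 ≤ k) : invBserCoeff n k 0 = 1 := by
  simpa [constantCoeff_Bser n hk] using invBserCoeff_natCast n k 0

theorem monotone_invBserCoeff {n k : ℕ} (hn : 2 ≤ n) (hk : 3 ≤ k) (hnk : (n, k) ≠ (2, 3)) :
    Monotone (invBserCoeff n k) := by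
  have hn' : (2 : ℚ) ≤ n := by exact_mod_cast hn
  refine monotone_of_eq_mul_sum_sub (r := k - 2) (by linarith) (by omega) ?_
    (fun m hm => invBserCoeff_of_neg n k hm)
    (by rw [invBserCoeff_zero n (by omega : 2 ≤ k)]; exact zero_le_one)
    (invBserCoeff_succ n (by omega))
  have hcases : 3 ≤ n ∨ 4 ≤ k := by
    by_contra! h
    exact hnk (by rw [show n = 2 by omega, show k = 3 by omega])
  rcases hcases with hn3 | hk4
  · have : (3 : ℚ) ≤ n := by exact_mod_cast hn3
    exact Or.inl (by linarith)
  · exact Or.inr (by omega)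

theorem one_le_coeff_Bser_inv {n k : ℕ} (hn : 2 ≤ n) (hk : 3 ≤ k) (hnk : (n, k) ≠ (2, 3))
    (j : ℕ) : 1 ≤ coeff j (Bser n k)⁻¹ := by
  rw [← invBserCoeff_natCast, ← invBserCoeff_zero n (by omega : 2 ≤ k)]
  exact monotone_invBserCoeff hn hk hnk (Nat.cast_nonneg j)

theorem Qser_coeff_strictMono (n k : ℕ) (hn : 2 ≤ n) (hk : 3 ≤ k)
    (hnk : (n, k) ≠ (2, 3)) :
    StrictMono (fun j : ℕ => PowerSeries.coeff j (Qser n k)) ∧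
    Filter.Tendsto (fun j : ℕ => PowerSeries.coeff j (Qser n k))
      Filter.atTop Filter.atTop := by
  have hs : ∀ j : ℕ, (j : ℚ) + 1 ≤ coeff j ((1 - X) * Qser n k) :=
    natCast_add_one_le_coeff fun j => by
      rw [one_sub_X_mul_one_sub_X_mul_Qser n (by omega)]
      exact one_le_coeff_Bser_inv hn hk hnk j
  have hb : ∀ j : ℕ, (j : ℚ) + 1 ≤ coeff j (Qser n k) :=
    natCast_add_one_le_coeff fun j => (le_add_of_nonneg_left j.cast_nonneg).trans (hs j)
  refine ⟨strictMono_nat_of_lt_succ fun j => ?_, tendsto_atTop_mono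
    (fun j => (le_add_of_nonneg_right zero_le_one).trans (hb j)) tendsto_natCast_atTop_atTop⟩
  have hdiff := coeff_succ_sub_coeff (Qser n k) j
  linarith [hs (j + 1), (j + 1).cast_nonneg (α := ℚ)]
end
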